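/- For the 4-dimensional complex Novikov algebra N⁴₀₂ (nonzero products e₁e₁ = e₂, e₂e₁ = e₃, e₁e₃ = e₄, e₃e₁ = -e₄), a bilinear form θ = Σ c_{ij} Δ_{ij} is a 2-cocycle if and only if θ lies in the span of Δ₁₁, Δ₁₂, Δ₁₃ - Δ₃₁, Δ₂₁, and 2Δ₁₄ - Δ₂₃ - Δ₄₁; in particular dim Z²(N⁴₀₂, ℂ) = 5. -/
import Mathlib

/-- The 4-dimensional Novikov algebra `N⁴₀₂` over ℂ, with nonzero products
`e₁e₁ = e₂`, `e₂e₁ = e₃`, `e₁e₃ = e₄`, `e₃e₁ = -e₄`. -/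
noncomputable def mulN402 (a b : Fin 4 → ℂ) : Fin 4 → ℂ :=
  ![0, a 0 * b 0, a 1 * b 0, a 0 * b 2 - a 2 * b 0]

/-- The bilinear form `Δᵢⱼ` with `Δᵢⱼ(e_l, e_m) = δ_{il} δ_{jm}`. -/
noncomputable def Delta (i j : Fin 4) :
    (Fin 4 → ℂ) →ₗ[ℂ] (Fin 4 → ℂ) →ₗ[ℂ] ℂ :=
  LinearMap.mk₂ ℂ (fun a b => a i * b j)
    (fun a a' b => by simp [add_mul])
    (fun c a b => by simp [smul_eq_mul]; ring)
    (fun a b b' => by simp [mul_add])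
    (fun c a b => by simp [smul_eq_mul]; ring)

/-- The standard basis vectors of `ℂ⁴`. -/
noncomputable def Evec (i : Fin 4) : Fin 4 → ℂ := Pi.single i 1

lemma bilin_rep (θ : (Fin 4 → ℂ) →ₗ[ℂ] (Fin 4 → ℂ) →ₗ[ℂ] ℂ) (x y : Fin 4 → ℂ) :
    θ x y = ∑ i : Fin 4, ∑ j : Fin 4, x i * y j * θ (Evec i) (Evec j) := by
  have hx : x = ∑ i, x i • Evec i := by
    funext k
    simp [Evec, Finset.sum_apply, Pi.single_apply, mul_ite, Finset.sum_ite_eq']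
  have hy : y = ∑ j, y j • Evec j := by
    funext k
    simp [Evec, Finset.sum_apply, Pi.single_apply, mul_ite, Finset.sum_ite_eq']
  conv_lhs => rw [hx, hy]
  simp only [map_sum, LinearMap.sum_apply, map_smul, LinearMap.smul_apply, smul_eq_mul]
  rw [Finset.sum_comm]
  refine Finset.sum_congr rfl fun i _ => ?_
  rw [Finset.mul_sum]
  exact Finset.sum_congr rfl fun j _ => by ring

lemma m00 : mulN402 (Evec 0) (Evec 0) = Evec 1 := by
  funext k; fin_cases k <;> simp [mulN402, Evec, Pi.single_apply]

lemma m10 : mulN402 (Evec 1) (Evec 0) = Evec 2 := by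
  funext k; fin_cases k <;> simp [mulN402, Evec, Pi.single_apply]

lemma m02 : mulN402 (Evec 0) (Evec 2) = Evec 3 := by
  funext k; fin_cases k <;> simp [mulN402, Evec, Pi.single_apply]

lemma m20 : mulN402 (Evec 2) (Evec 0) = -Evec 3 := by
  funext k; fin_cases k <;> simp [mulN402, Evec, Pi.single_apply]

lemma m01 : mulN402 (Evec 0) (Evec 1) = 0 := by
  funext k; fin_cases k <;> simp [mulN402, Evec, Pi.single_apply]

lemma m03 : mulN402 (Evec 0) (Evec 3) = 0 := by
  funext k; fin_cases k <;> simp [mulN402, Evec, Pi.single_apply]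

lemma m11 : mulN402 (Evec 1) (Evec 1) = 0 := by
  funext k; fin_cases k <;> simp [mulN402, Evec, Pi.single_apply]

lemma m12 : mulN402 (Evec 1) (Evec 2) = 0 := by
  funext k; fin_cases k <;> simp [mulN402, Evec, Pi.single_apply]

lemma m13 : mulN402 (Evec 1) (Evec 3) = 0 := by
  funext k; fin_cases k <;> simp [mulN402, Evec, Pi.single_apply]

lemma m22 : mulN402 (Evec 2) (Evec 2) = 0 := by
  funext k; fin_cases k <;> simp [mulN402, Evec, Pi.single_apply]

lemma N402_key (θ : (Fin 4 → ℂ) →ₗ[ℂ] (Fin 4 → ℂ) →ₗ[ℂ] ℂ)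
    (h : ∀ x y z : Fin 4 → ℂ,
        θ (mulN402 x y) z = θ (mulN402 x z) y ∧
        θ (mulN402 x y) z - θ x (mulN402 y z)
          = θ (mulN402 y x) z - θ y (mulN402 x z)) :
    θ = θ (Evec 0) (Evec 0) • Delta 0 0 + θ (Evec 0) (Evec 1) • Delta 0 1
      + θ (Evec 0) (Evec 2) • (Delta 0 2 - Delta 2 0) + θ (Evec 1) (Evec 0) • Delta 1 0
      + (-(θ (Evec 1) (Evec 2))) • ((2 : ℂ) • Delta 0 3 - Delta 1 2 - Delta 3 0) := by
  have e11 : θ (Evec 1) (Evec 1) = 0 := by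
    have := (h (Evec 0) (Evec 0) (Evec 1)).1
    rw [m00, m01] at this; simpa using this
  have e13 : θ (Evec 1) (Evec 3) = 0 := by
    have := (h (Evec 0) (Evec 0) (Evec 3)).1
    rw [m00, m03] at this; simpa using this
  have e1230 : θ (Evec 1) (Evec 2) = θ (Evec 3) (Evec 0) := by
    have := (h (Evec 0) (Evec 0) (Evec 2)).1
    rwa [m00, m02] at this
  have e21 : θ (Evec 2) (Evec 1) = 0 := by
    have := (h (Evec 1) (Evec 0) (Evec 1)).1
    rw [m10, m11] at this; simpa using this
  have e22 : θ (Evec 2) (Evec 2) = 0 := by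
    have := (h (Evec 1) (Evec 0) (Evec 2)).1
    rw [m10, m12] at this; simpa using this
  have e23 : θ (Evec 2) (Evec 3) = 0 := by
    have := (h (Evec 1) (Evec 0) (Evec 3)).1
    rw [m10, m13] at this; simpa using this
  have e31 : θ (Evec 3) (Evec 1) = 0 := by
    have := (h (Evec 0) (Evec 2) (Evec 1)).1
    rw [m02, m01] at this; simpa using this
  have e33 : θ (Evec 3) (Evec 3) = 0 := by
    have := (h (Evec 0) (Evec 2) (Evec 3)).1
    rw [m02, m03] at this; simpa using this
  have e32 : θ (Evec 3) (Evec 2) = 0 := by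
    have := (h (Evec 2) (Evec 0) (Evec 2)).1
    rw [m20, m22] at this; simpa using this
  have e20 : θ (Evec 2) (Evec 0) = -(θ (Evec 0) (Evec 2)) := by
    have := (h (Evec 1) (Evec 0) (Evec 0)).2
    rw [m10, m00, m01] at this
    simp only [map_zero, LinearMap.zero_apply, zero_sub, e11, sub_zero] at this
    exact this
  have e03 : θ (Evec 0) (Evec 3) = -2 * θ (Evec 1) (Evec 2) := by
    have := (h (Evec 0) (Evec 2) (Evec 0)).2
    rw [m02, m20, m00] at this
    simp only [map_neg, LinearMap.neg_apply, sub_neg_eq_add, e21, sub_zero] at this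
    linear_combination this + 2 * e1230
  apply LinearMap.ext; intro x; apply LinearMap.ext; intro y
  rw [bilin_rep θ x y]
  simp only [Fin.sum_univ_four, LinearMap.add_apply, LinearMap.sub_apply, LinearMap.smul_apply,
    Delta, LinearMap.mk₂_apply, smul_eq_mul]
  linear_combination (x 1 * y 1) * e11 + (x 1 * y 3) * e13 + (x 2 * y 1) * e21
    + (x 2 * y 2) * e22 + (x 2 * y 3) * e23 + (x 3 * y 1) * e31 + (x 3 * y 2) * e32
    + (x 3 * y 3) * e33 + (x 0 * y 3) * e03 + (x 2 * y 0) * e20 - (x 3 * y 0) * e1230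

lemma N402_range : ({Delta 0 0, Delta 0 1, Delta 0 2 - Delta 2 0, Delta 1 0,
      (2 : ℂ) • Delta 0 3 - Delta 1 2 - Delta 3 0} :
      Set ((Fin 4 → ℂ) →ₗ[ℂ] (Fin 4 → ℂ) →ₗ[ℂ] ℂ)) =
    Set.range ![Delta 0 0, Delta 0 1, Delta 0 2 - Delta 2 0, Delta 1 0,
      (2 : ℂ) • Delta 0 3 - Delta 1 2 - Delta 3 0] := by
  ext η
  simp only [Matrix.range_cons, Matrix.range_cons_empty, Set.singleton_union,
    Set.mem_insert_iff, Set.mem_singleton_iff, Set.mem_union, Matrix.range_empty,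
    Set.mem_empty_iff_false, or_false, false_or]

lemma N402_li : LinearIndependent ℂ
    ![Delta 0 0, Delta 0 1, Delta 0 2 - Delta 2 0, Delta 1 0,
      (2 : ℂ) • Delta 0 3 - Delta 1 2 - Delta 3 0] := by
  rw [Fintype.linearIndependent_iff]
  intro g hg
  have ev : ∀ a b : Fin 4,
      (∑ k : Fin 5, g k • ![Delta 0 0, Delta 0 1, Delta 0 2 - Delta 2 0, Delta 1 0,
        (2 : ℂ) • Delta 0 3 - Delta 1 2 - Delta 3 0] k) (Pi.single a 1) (Pi.single b 1)
        = 0 := by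
    intro a b; rw [hg]; simp
  have h0 := ev 0 0
  have h1 := ev 0 1
  have h2 := ev 0 2
  have h3 := ev 1 0
  have h4 := ev 1 2
  simp [Fin.sum_univ_five, Delta, Pi.single_apply] at h0 h1 h2 h3 h4
  intro i; fin_cases i <;> simp_all

lemma N402_finrank :
    Module.finrank ℂ
      (Submodule.span ℂ
        ({Delta 0 0, Delta 0 1, Delta 0 2 - Delta 2 0, Delta 1 0,
          (2 : ℂ) • Delta 0 3 - Delta 1 2 - Delta 3 0} :
          Set ((Fin 4 → ℂ) →ₗ[ℂ] (Fin 4 → ℂ) →ₗ[ℂ] ℂ))) = 5 := by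
  rw [N402_range, finrank_span_eq_card N402_li]
  simp

/-- A bilinear form `θ` on `N⁴₀₂` is a 2-cocycle if and only if it lies in the
span of `Δ₁₁, Δ₁₂, Δ₁₃ - Δ₃₁, Δ₂₁, 2Δ₁₄ - Δ₂₃ - Δ₄₁`; in particular
`dim Z²(N⁴₀₂, ℂ) = 5`. -/
theorem N402_cocycles :
    (∀ θ : (Fin 4 → ℂ) →ₗ[ℂ] (Fin 4 → ℂ) →ₗ[ℂ] ℂ,
      (∀ x y z : Fin 4 → ℂ,
        θ (mulN402 x y) z = θ (mulN402 x z) y ∧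
        θ (mulN402 x y) z - θ x (mulN402 y z)
          = θ (mulN402 y x) z - θ y (mulN402 x z)) ↔
      θ ∈ Submodule.span ℂ
        ({Delta 0 0, Delta 0 1, Delta 0 2 - Delta 2 0, Delta 1 0,
          (2 : ℂ) • Delta 0 3 - Delta 1 2 - Delta 3 0} :
          Set ((Fin 4 → ℂ) →ₗ[ℂ] (Fin 4 → ℂ) →ₗ[ℂ] ℂ))) ∧
    Module.finrank ℂ
      (Submodule.span ℂ
        ({Delta 0 0, Delta 0 1, Delta 0 2 - Delta 2 0, Delta 1 0,
          (2 : ℂ) • Delta 0 3 - Delta 1 2 - Delta 3 0} :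
          Set ((Fin 4 → ℂ) →ₗ[ℂ] (Fin 4 → ℂ) →ₗ[ℂ] ℂ))) = 5 := by
  constructor
  · intro θ
    constructor
    · intro h
      rw [N402_key θ h]
      have mem1 : Delta 0 0 ∈ ({Delta 0 0, Delta 0 1, Delta 0 2 - Delta 2 0, Delta 1 0,
          (2 : ℂ) • Delta 0 3 - Delta 1 2 - Delta 3 0} :
          Set ((Fin 4 → ℂ) →ₗ[ℂ] (Fin 4 → ℂ) →ₗ[ℂ] ℂ)) := by simp
      have mem2 : Delta 0 1 ∈ ({Delta 0 0, Delta 0 1, Delta 0 2 - Delta 2 0, Delta 1 0,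
          (2 : ℂ) • Delta 0 3 - Delta 1 2 - Delta 3 0} :
          Set ((Fin 4 → ℂ) →ₗ[ℂ] (Fin 4 → ℂ) →ₗ[ℂ] ℂ)) := by simp
      have mem3 : Delta 0 2 - Delta 2 0 ∈ ({Delta 0 0, Delta 0 1, Delta 0 2 - Delta 2 0,
          Delta 1 0, (2 : ℂ) • Delta 0 3 - Delta 1 2 - Delta 3 0} :
          Set ((Fin 4 → ℂ) →ₗ[ℂ] (Fin 4 → ℂ) →ₗ[ℂ] ℂ)) := by simp
      have mem4 : Delta 1 0 ∈ ({Delta 0 0, Delta 0 1, Delta 0 2 - Delta 2 0, Delta 1 0,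
          (2 : ℂ) • Delta 0 3 - Delta 1 2 - Delta 3 0} :
          Set ((Fin 4 → ℂ) →ₗ[ℂ] (Fin 4 → ℂ) →ₗ[ℂ] ℂ)) := by simp
      have mem5 : (2 : ℂ) • Delta 0 3 - Delta 1 2 - Delta 3 0 ∈ ({Delta 0 0, Delta 0 1,
          Delta 0 2 - Delta 2 0, Delta 1 0, (2 : ℂ) • Delta 0 3 - Delta 1 2 - Delta 3 0} :
          Set ((Fin 4 → ℂ) →ₗ[ℂ] (Fin 4 → ℂ) →ₗ[ℂ] ℂ)) := by simp
      exact Submodule.add_mem _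
        (Submodule.add_mem _
          (Submodule.add_mem _
            (Submodule.add_mem _
              (Submodule.smul_mem _ _ (Submodule.subset_span mem1))
              (Submodule.smul_mem _ _ (Submodule.subset_span mem2)))
            (Submodule.smul_mem _ _ (Submodule.subset_span mem3)))
          (Submodule.smul_mem _ _ (Submodule.subset_span mem4)))
        (Submodule.smul_mem _ _ (Submodule.subset_span mem5))
    · intro hθ
      induction hθ using Submodule.span_induction with
      | mem a ha =>
        simp only [Set.mem_insert_iff, Set.mem_singleton_iff] at ha
        rcases ha with rfl | rfl | rfl | rfl | rfl <;>
          refine fun x y z => ⟨?_, ?_⟩ <;>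
          · simp only [Delta, mulN402, LinearMap.mk₂_apply, LinearMap.sub_apply,
              LinearMap.smul_apply, smul_eq_mul, Matrix.cons_val_zero, Matrix.cons_val_one,
              Matrix.head_cons, Matrix.cons_val_two, Matrix.tail_cons, Matrix.cons_val_three]
            ring
      | zero => exact fun x y z => by simp
      | add a b _ _ pa pb =>
        intro x y z
        obtain ⟨pa1, pa2⟩ := pa x y z
        obtain ⟨pb1, pb2⟩ := pb x y z
        refine ⟨?_, ?_⟩ <;> simp only [LinearMap.add_apply]
        · linear_combination pa1 + pb1
        · linear_combination pa2 + pb2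
      | smul c a _ pa =>
        intro x y z
        obtain ⟨pa1, pa2⟩ := pa x y z
        refine ⟨?_, ?_⟩ <;> simp only [LinearMap.smul_apply, smul_eq_mul]
        · linear_combination c * pa1
        · linear_combination c * pa2
  · exact N402_finrank
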